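/- arXiv:1710.01896 — 2 statements merged into one kernel-verified Lean document; each statement's English description precedes it below -/
import Mathlib

section
/- Let 0 ≤ j ≤ k ≤ n−2 and suppose S_m has type B for every m with j ≤ m ≤ k. Then the suffixes are strictly increasing in text order along this run: S_j < S_{j+1} < … < S_k < S_{k+1} in lexicographic order. -/
/-- The suffix `S_i = T[i..n)` of the text `T` of length `n`, as a list. -/
def suff {α : Type*} (T : ℕ → α) (n i : ℕ) : List α :=
  (List.range (n - i)).map (fun t => T (i + t))

/-- `S_i` has type B: there is a `k ≥ i` with `T[k] < T[k+1]` and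
`T[m] = T[m+1]` for all `i ≤ m < k`. -/
def TypeB {α : Type*} [LinearOrder α] (T : ℕ → α) (n i : ℕ) : Prop :=
  ∃ k, i ≤ k ∧ k + 1 < n ∧ T k < T (k + 1) ∧ ∀ m, i ≤ m → m < k → T m = T (m + 1)

/-- `S_i` has type A: either there is a `k ≥ i` with `T[k] > T[k+1]` and
`T[m] = T[m+1]` for all `i ≤ m < k`, or all characters from position `i`
to the end are equal (the type propagates from `S_{n-1}`). -/
def TypeA {α : Type*} [LinearOrder α] (T : ℕ → α) (n i : ℕ) : Prop :=
  (∃ k, i ≤ k ∧ k + 1 < n ∧ T (k + 1) < T k ∧ ∀ m, i ≤ m → m < k → T m = T (m + 1))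
  ∨ (∀ m, i ≤ m → m + 1 < n → T m = T (m + 1))

/-- `S_i` is a B*-suffix: `S_i` has type B and `S_{i+1}` has type A. -/
def TypeBStar {α : Type*} [LinearOrder α] (T : ℕ → α) (n i : ℕ) : Prop :=
  TypeB T n i ∧ TypeA T n (i + 1)

/-- `lcp T n i j` is the largest `s ≥ 0` with `i + s ≤ n`, `j + s ≤ n` and
`T[i+t] = T[j+t]` for all `t < s`. -/
noncomputable def lcp {α : Type*} (T : ℕ → α) (n i j : ℕ) : ℕ :=
  sSup {s | i + s ≤ n ∧ j + s ≤ n ∧ ∀ t, t < s → T (i + t) = T (j + t)}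


lemma suff_cons {α : Type*} (T : ℕ → α) {n i : ℕ} (h : i < n) :
    suff T n i = T i :: suff T n (i + 1) := by
  unfold suff
  have hni : n - i = (n - (i + 1)) + 1 := by omega
  rw [hni, List.range_succ_eq_map, List.map_cons, List.map_map]
  simp only [Nat.add_zero]
  congr 1
  apply List.map_congr_left
  intro t _
  simp only [Function.comp_apply]
  congr 1
  omega

lemma key_lex {α : Type*} [LinearOrder α] (T : ℕ → α) (n : ℕ) :
    ∀ s i, i + s + 1 < n → T (i + s) < T (i + s + 1) →
    (∀ t, t < s → T (i + t) = T (i + t + 1)) →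
    List.Lex (· < ·) (suff T n i) (suff T n (i + 1)) := by
  intro s
  induction s with
  | zero =>
    intro i h1 h2 _
    rw [suff_cons T (by omega : i < n), suff_cons T (by omega : i + 1 < n)]
    exact List.Lex.rel (by simpa using h2)
  | succ s ih =>
    intro i h1 h2 h3
    have h0 : T i = T (i + 1) := by simpa using h3 0 (by omega)
    rw [suff_cons T (by omega : i < n)]
    conv_rhs => rw [suff_cons T (by omega : i + 1 < n)]
    rw [h0]
    refine List.Lex.cons ?_
    have e1 : i + 1 + s = i + s + 1 := by omega
    exact ih (i + 1) (by omega)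
      (by rw [e1]; exact h2)
      (by intro t ht
          have e2 : i + 1 + t = i + (t + 1) := by omega
          rw [e2]; exact h3 (t + 1) (by omega))

/-- Along a run of B-suffixes `S_j, …, S_k` the suffixes are strictly
increasing in text order: `S_m < S_{m+1}` for all `j ≤ m ≤ k`. -/
theorem stmt_6 {α : Type*} [LinearOrder α] (T : ℕ → α) (n : ℕ) (hn : 1 ≤ n)
    (j k : ℕ) (hjk : j ≤ k) (hk : k ≤ n - 2)
    (hB : ∀ m, j ≤ m → m ≤ k → TypeB T n m) :
    ∀ m, j ≤ m → m ≤ k → List.Lex (· < ·) (suff T n m) (suff T n (m + 1)) := by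
  intro m hjm hmk
  obtain ⟨k', hmk', hk'n, hlt, heq⟩ := hB m hjm hmk
  apply key_lex T n (k' - m) m (by omega)
  · have h1 : m + (k' - m) = k' := by omega
    rw [h1]
    exact hlt
  · intro t ht
    exact heq (m + t) (by omega) (by omega)
end

section
/- Let 0 ≤ u < n−1, put i = SA[u] and j = SA[u+1], and assume i ≤ n−2, j ≤ n−2 and T[i] = T[j]. Let v = ISA[i+1] and w = ISA[j+1], and assume either u+1 < min(v,w) or max(v,w) < u. Then LCP[u+1] = min{ LCP[k] : min(v,w) < k ≤ max(v,w) } + 1. -/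
/-!
Since `T[i] = T[j]`, the suffixes `S_i` and `S_j` share one more character than `S_{i+1}` and
`S_{j+1}`, so `LCP[u+1] = lcp(i, j) = lcp(SA[v], SA[w]) + 1`. For sorted suffixes
`S_x < S_y < S_z` and `s = min (lcp(x, y)) (lcp(y, z))`, all three agree below `s`, while at `s`
either `S_x` has ended or `T[x+s] ≤ T[y+s] ≤ T[z+s]` with one inequality strict; hence
`lcp(x, z) = s`. Iterating along the suffix array, the lcp of `S_{SA[a]}` and `S_{SA[b]}` is the
minimum of `LCP` over `(a, b]`, whatever the relative order of `a` and `b`.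
-/

section lcp

variable {α : Type*} (T : ℕ → α) {n i j : ℕ}

lemma bddAbove_lcp_set (n i j : ℕ) :
    BddAbove {s | i + s ≤ n ∧ j + s ≤ n ∧ ∀ t, t < s → T (i + t) = T (j + t)} :=
  ⟨n, fun _ hs => (Nat.le_add_left _ i).trans hs.1⟩

lemma lcp_spec (hi : i ≤ n) (hj : j ≤ n) :
    i + lcp T n i j ≤ n ∧ j + lcp T n i j ≤ n ∧ ∀ t < lcp T n i j, T (i + t) = T (j + t) :=
  Nat.sSup_mem ⟨0, by simpa using And.intro hi hj⟩ (bddAbove_lcp_set T n i j)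

lemma le_lcp {s : ℕ} (hi : i + s ≤ n) (hj : j + s ≤ n) (h : ∀ t < s, T (i + t) = T (j + t)) :
    s ≤ lcp T n i j :=
  le_csSup (bddAbove_lcp_set T n i j) ⟨hi, hj, h⟩

lemma lcp_comm (n i j : ℕ) : lcp T n i j = lcp T n j i := by
  unfold lcp
  congr 1
  ext s
  constructor <;> exact fun ⟨hi, hj, h⟩ => ⟨hj, hi, fun t ht => (h t ht).symm⟩

lemma lcp_mismatch (hi : i + lcp T n i j < n) (hj : j + lcp T n i j < n) :
    T (i + lcp T n i j) ≠ T (j + lcp T n i j) := by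
  intro heq
  have hagree := (lcp_spec T (n := n) (i := i) (j := j) (by omega) (by omega)).2.2
  have := le_lcp T (s := lcp T n i j + 1) hi hj fun t ht => by
    rcases Nat.lt_succ_iff_lt_or_eq.1 ht with ht | rfl
    exacts [hagree t ht, heq]
  omega

lemma lcp_eq_of_mismatch {s : ℕ} (hi : i + s ≤ n) (hj : j + s ≤ n)
    (h : ∀ t < s, T (i + t) = T (j + t)) (hs : i + s < n → j + s < n → T (i + s) ≠ T (j + s)) :
    lcp T n i j = s := by
  refine le_antisymm ?_ (le_lcp T hi hj h)
  by_contra! hlt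
  obtain ⟨hi', hj', hagree⟩ := lcp_spec T (n := n) (i := i) (j := j) (by omega) (by omega)
  exact hs (by omega) (by omega) (hagree s hlt)

lemma lcp_eq_lcp_succ_add_one (hi : i < n) (hj : j < n) (hT : T i = T j) :
    lcp T n i j = lcp T n (i + 1) (j + 1) + 1 := by
  obtain ⟨hi', hj', hagree⟩ := lcp_spec T (n := n) (i := i + 1) (j := j + 1) hi hj
  apply lcp_eq_of_mismatch T (by omega) (by omega)
  · rintro (_ | t) ht
    · simpa using hT
    · rw [← add_assoc, ← add_assoc, add_right_comm i, add_right_comm j]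
      exact hagree t (by omega)
  · intro hin hjn
    rw [← add_assoc, ← add_assoc, add_right_comm i, add_right_comm j]
    exact lcp_mismatch T (by omega) (by omega)

end lcp

section suff

variable {α : Type*} (T : ℕ → α) {n : ℕ}

@[simp] lemma length_suff (i : ℕ) : (suff T n i).length = n - i := by simp [suff]

@[simp] lemma getElem_suff {i t : ℕ} (ht : t < (suff T n i).length) :
    (suff T n i)[t] = T (i + t) := by
  simp [suff]

variable [Preorder α]

lemma lt_at_lcp_of_suff_lt {x y : ℕ} (hx : x ≤ n) (h : suff T n x < suff T n y) :
    y + lcp T n x y < n ∧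
      (x + lcp T n x y < n → T (x + lcp T n x y) < T (y + lcp T n x y)) := by
  rcases List.lt_iff_exists.1 h with ⟨hpre, hlen⟩ | ⟨s, hsx, hsy, hagree, hlt⟩
  · simp only [length_suff] at hlen hpre
    have hlcp : lcp T n x y = n - x := by
      refine lcp_eq_of_mismatch T (by omega) (by omega) (fun t ht => ?_) (by omega)
      have := List.getElem_of_eq hpre (by simpa using ht)
      simpa only [getElem_suff, List.getElem_take] using this
    omega
  · simp only [length_suff, getElem_suff] at hsx hsy hagree hlt
    rw [lcp_eq_of_mismatch T (by omega) (by omega) hagree fun _ _ => hlt.ne]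
    exact ⟨by omega, fun _ => hlt⟩

lemma le_at_of_suff_lt {x y t : ℕ} (hx : x ≤ n) (h : suff T n x < suff T n y)
    (ht : t ≤ lcp T n x y) (hxt : x + t < n) : T (x + t) ≤ T (y + t) := by
  obtain ⟨hy, hlt⟩ := lt_at_lcp_of_suff_lt T hx h
  rcases ht.lt_or_eq with ht | rfl
  · exact ((lcp_spec T hx (by omega)).2.2 t ht).le
  · exact (hlt hxt).le

theorem lcp_eq_min_of_suff_lt {x y z : ℕ} (hx : x ≤ n) (hxy : suff T n x < suff T n y)
    (hyz : suff T n y < suff T n z) : lcp T n x z = min (lcp T n x y) (lcp T n y z) := by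
  obtain ⟨hy, hxy_lt⟩ := lt_at_lcp_of_suff_lt T hx hxy
  obtain ⟨hz, hyz_lt⟩ := lt_at_lcp_of_suff_lt T (by omega) hyz
  obtain ⟨hxy_x, -, hxy_eq⟩ := lcp_spec T (n := n) (i := x) (j := y) hx (by omega)
  obtain ⟨-, hyz_z, hyz_eq⟩ := lcp_spec T (n := n) (i := y) (j := z) (by omega) (by omega)
  refine lcp_eq_of_mismatch T (by omega) (by omega) ?_ ?_
  · intro t ht
    exact (hxy_eq t (lt_min_iff.1 ht).1).trans (hyz_eq t (lt_min_iff.1 ht).2)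
  · intro hxn _
    have hxy_le := le_at_of_suff_lt T hx hxy (min_le_left _ (lcp T n y z)) hxn
    have hyz_le :=
      le_at_of_suff_lt T (by omega) hyz (min_le_right (lcp T n x y) _) (by omega)
    rcases min_choice (lcp T n x y) (lcp T n y z) with hmin | hmin <;>
      rw [hmin] at hxn hxy_le hyz_le ⊢
    · exact ((hxy_lt hxn).trans_le hyz_le).ne
    · exact (hxy_le.trans_lt (hyz_lt (by omega))).ne

end suff

section SuffixArray

variable {α : Type*} [Preorder α] (T : ℕ → α) {n : ℕ} (SA LCP : ℕ → ℕ)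
  (hSA : ∀ u < n, SA u < n)
  (hsorted : ∀ u v, u < v → v < n → suff T n (SA u) < suff T n (SA v))
  (hLCP : ∀ k, 1 ≤ k → k < n → LCP k = lcp T n (SA (k - 1)) (SA k))
include hSA hsorted hLCP

theorem lcp_eq_sInf_image_Ioc {a b : ℕ} (hab : a < b) (hb : b < n) :
    lcp T n (SA a) (SA b) = sInf (LCP '' Set.Ioc a b) := by
  induction b, hab using Nat.le_induction with
  | base =>
    have hIoc : Set.Ioc a (a + 1) = {a + 1} := by ext; simp; omega
    simp [hIoc, hLCP (a + 1) (by omega) hb]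
  | succ b hab ih =>
    have hIoc : Set.Ioc a (b + 1) = insert (b + 1) (Set.Ioc a b) := by ext; simp; omega
    rw [hIoc, Set.image_insert_eq, csInf_insert (OrderBot.bddBelow _)
      ((Set.nonempty_Ioc.2 hab).image _), ← ih (by omega), hLCP (b + 1) (by omega) hb,
      Nat.add_sub_cancel, min_comm]
    exact lcp_eq_min_of_suff_lt T (hSA a (by omega)).le (hsorted a b hab (by omega))
      (hsorted b (b + 1) (by omega) hb)

theorem lcp_eq_sInf_image_Ioc_min_max {v w : ℕ} (hvw : v ≠ w) (hv : v < n) (hw : w < n) :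
    lcp T n (SA v) (SA w) = sInf (LCP '' Set.Ioc (min v w) (max v w)) := by
  rcases hvw.lt_or_gt with h | h
  · rw [min_eq_left h.le, max_eq_right h.le]
    exact lcp_eq_sInf_image_Ioc T SA LCP hSA hsorted hLCP h hw
  · rw [min_eq_right h.le, max_eq_left h.le, lcp_comm]
    exact lcp_eq_sInf_image_Ioc T SA LCP hSA hsorted hLCP h hv

end SuffixArray

theorem stmt_10_general {α : Type*} [LinearOrder α] (T : ℕ → α) (n : ℕ)
    (SA ISA LCPA : ℕ → ℕ)
    (hSAlt : ∀ u, u < n → SA u < n)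
    (hSAsorted : ∀ u v, u < v → v < n →
      List.Lex (· < ·) (suff T n (SA u)) (suff T n (SA v)))
    (hISA : ∀ p, p < n → ISA p < n ∧ SA (ISA p) = p)
    (hLCPA : ∀ k, 1 ≤ k → k < n → LCPA k = lcp T n (SA (k - 1)) (SA k))
    (u i j v w : ℕ) (hu : u < n - 1)
    (hiSA : i = SA u) (hjSA : j = SA (u + 1))
    (hi : i ≤ n - 2) (hj : j ≤ n - 2) (hT : T i = T j)
    (hv : v = ISA (i + 1)) (hw : w = ISA (j + 1)) :
    LCPA (u + 1) = sInf (LCPA '' {k | min v w < k ∧ k ≤ max v w}) + 1 := by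
  obtain ⟨hvn, hSAv⟩ := hv ▸ hISA (i + 1) (by omega)
  obtain ⟨hwn, hSAw⟩ := hw ▸ hISA (j + 1) (by omega)
  have hij : i ≠ j := by
    rintro rfl
    exact List.lt_irrefl _ (hjSA ▸ hiSA ▸ hSAsorted u (u + 1) u.lt_succ_self (by omega))
  have hvw : v ≠ w := by
    rintro rfl
    exact hij (by omega)
  calc LCPA (u + 1) = lcp T n i j := by simp [hLCPA (u + 1) (by omega) (by omega), hiSA, hjSA]
    _ = lcp T n (SA v) (SA w) + 1 := by
      rw [lcp_eq_lcp_succ_add_one T (by omega) (by omega) hT, hSAv, hSAw]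
    _ = _ := by
      rw [lcp_eq_sInf_image_Ioc_min_max T SA LCPA hSAlt hSAsorted hLCPA hvw hvn hwn]
      rfl

/-- Inducing an LCP-value as a range minimum: if `i = SA[u]` and
`j = SA[u+1]` start with the same character, `v = ISA[i+1]`,
`w = ISA[j+1]`, and either `u + 1 < min v w` or `max v w < u`, then
`LCP[u+1] = min { LCP[k] : min v w < k ≤ max v w } + 1`. -/
theorem stmt_10 {α : Type*} [LinearOrder α] (T : ℕ → α) (n : ℕ) (hn : 1 ≤ n)
    (SA ISA LCPA : ℕ → ℕ)
    (hSAlt : ∀ u, u < n → SA u < n)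
    (hSAsorted : ∀ u v, u < v → v < n →
      List.Lex (· < ·) (suff T n (SA u)) (suff T n (SA v)))
    (hSAsurj : ∀ p, p < n → ∃ u, u < n ∧ SA u = p)
    (hISA : ∀ p, p < n → ISA p < n ∧ SA (ISA p) = p)
    (hLCPA : ∀ k, 1 ≤ k → k < n → LCPA k = lcp T n (SA (k - 1)) (SA k))
    (u i j v w : ℕ) (hu : u < n - 1)
    (hiSA : i = SA u) (hjSA : j = SA (u + 1))
    (hi : i ≤ n - 2) (hj : j ≤ n - 2) (hT : T i = T j)
    (hv : v = ISA (i + 1)) (hw : w = ISA (j + 1))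
    (hside : u + 1 < min v w ∨ max v w < u) :
    LCPA (u + 1) = sInf (LCPA '' {k | min v w < k ∧ k ≤ max v w}) + 1 :=
  stmt_10_general T n SA ISA LCPA hSAlt hSAsorted hISA hLCPA u i j v w hu hiSA hjSA hi hj hT hv hw
end
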